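/- For K finite families A₁,…,A_K of points in ℝ^p and 0 < α ≤ 2, the between-sample dispersion S_α(A₁,…,A_K) = Σ_{j<k} (n_j n_k/(2N)) (2g_α(A_j,A_k) − g_α(A_j,A_j) − g_α(A_k,A_k)) is nonnegative. -/

import Mathlib

/-!
Every pairwise term is a nonnegative multiple of the energy distance
`2 g(A, B) - g(A, A) - g(B, B)`. Up to the positive factor `(|A| |B|)²`, this is
`-∑ c_i c_j ‖z_i - z_j‖^α` over the points `z` of both families, with the weights `c = |B|`
on `A` and `c = -|A|` on `B`, which sum to zero. So everything rests on Schoenberg's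
theorem that `‖x - y‖^α` is conditionally negative definite for `0 < α ≤ 2`.
For `α = 2` the quadratic form is `-2 ‖∑ c_i x_i‖²`. For `α = 2b` with `0 < b < 1`, the
substitution `s = tu` gives `u^b = C⁻¹ ∫₀^∞ (1 - e^{-tu}) t^{-1-b} dt` with
`C = ∫₀^∞ (1 - e^{-s}) s^{-1-b} ds > 0`, which reduces the claim to positive semidefiniteness
of the Gaussian kernels `e^{-t‖x - y‖²}`. That in turn follows from the power series of
`e^{2t⟪x, y⟫}`, whose terms are Hadamard powers of a Gram matrix (Schur product theorem).
-/

open Finset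

/-- The Gini mean of `α`-powered Euclidean distances between two finite
families of points. -/
noncomputable def giniMean {p : ℕ} {ι κ : Type*} [Fintype ι] [Fintype κ] (α : ℝ)
    (A : ι → EuclideanSpace ℝ (Fin p)) (B : κ → EuclideanSpace ℝ (Fin p)) : ℝ :=
  (1 / ((Fintype.card ι : ℝ) * (Fintype.card κ : ℝ))) *
    ∑ i : ι, ∑ m : κ, ‖A i - B m‖ ^ α

open Matrix MeasureTheory Set Real RealInnerProductSpace

section PositiveDefinite

variable {E : Type*} [NormedAddCommGroup E] [InnerProductSpace ℝ E] {ι : Type*} [Fintype ι]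

theorem sum_mul_mul_nonneg_of_posSemidef {M : Matrix ι ι ℝ} (hM : M.PosSemidef)
    (c : ι → ℝ) : 0 ≤ ∑ i, ∑ j, c i * c j * M i j := by
  have := hM.dotProduct_mulVec_nonneg c
  simp only [dotProduct, mulVec, star_trivial, mul_sum] at this
  exact this.trans_eq (sum_congr rfl fun i _ => sum_congr rfl fun j _ => by ring)

theorem posSemidef_inner_pow (x : ι → E) (m : ℕ) :
    (Matrix.of fun i j => ⟪x i, x j⟫ ^ m).PosSemidef := by
  induction m with
  | zero => simpa [vecMulVec] using posSemidef_vecMulVec_self_star (fun _ : ι => (1 : ℝ))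
  | succ m ih => simpa [pow_succ, hadamard, gram] using ih.hadamard (posSemidef_gram ℝ x)

theorem sum_mul_mul_exp_inner_nonneg (x : ι → E) (c : ι → ℝ) :
    0 ≤ ∑ i, ∑ j, c i * c j * exp ⟪x i, x j⟫ := by
  have hexp (a : ℝ) : HasSum (fun m : ℕ => a ^ m / m.factorial) (exp a) :=
    exp_eq_exp_ℝ ▸ NormedSpace.expSeries_div_hasSum_exp a
  have hsum : HasSum (fun m : ℕ => ∑ i, ∑ j, c i * c j * (⟪x i, x j⟫ ^ m / m.factorial))
      (∑ i, ∑ j, c i * c j * exp ⟪x i, x j⟫) :=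
    hasSum_sum fun i _ => hasSum_sum fun j _ => (hexp ⟪x i, x j⟫).mul_left (c i * c j)
  refine hsum.nonneg fun m => ?_
  simp only [mul_div_assoc', ← sum_div]
  exact div_nonneg (sum_mul_mul_nonneg_of_posSemidef (posSemidef_inner_pow x m) c)
    (by positivity)

theorem sum_mul_mul_exp_neg_mul_norm_sub_sq_nonneg {t : ℝ} (ht : 0 ≤ t) (x : ι → E)
    (c : ι → ℝ) : 0 ≤ ∑ i, ∑ j, c i * c j * exp (-(t * ‖x i - x j‖ ^ 2)) := by
  have hy (i j : ι) : ⟪√(2 * t) • x i, √(2 * t) • x j⟫ = 2 * t * ⟪x i, x j⟫ := by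
    rw [real_inner_smul_left, real_inner_smul_right, ← mul_assoc,
      mul_self_sqrt (by positivity)]
  convert sum_mul_mul_exp_inner_nonneg (fun i => √(2 * t) • x i)
    (fun i => c i * exp (-(t * ‖x i‖ ^ 2))) using 3 with i _ j
  rw [hy, norm_sub_sq_real, show -(t * (‖x i‖ ^ 2 - 2 * ⟪x i, x j⟫ + ‖x j‖ ^ 2)) =
    -(t * ‖x i‖ ^ 2) + -(t * ‖x j‖ ^ 2) + 2 * t * ⟪x i, x j⟫ by ring, exp_add, exp_add]
  ring

end PositiveDefinite

section IntegralRepresentation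

theorem integrableOn_one_sub_exp_neg_mul_rpow {b : ℝ} (hb0 : 0 < b) (hb1 : b < 1) :
    IntegrableOn (fun s : ℝ => (1 - exp (-s)) * s ^ (-1 - b)) (Ioi 0) := by
  have hmeas : AEStronglyMeasurable (fun s : ℝ => (1 - exp (-s)) * s ^ (-1 - b)) :=
    (by fun_prop : Measurable fun s : ℝ => (1 - exp (-s)) * s ^ (-1 - b)).aestronglyMeasurable
  have hnorm {s : ℝ} (hs : 0 < s) :
      ‖(1 - exp (-s)) * s ^ (-1 - b)‖ = (1 - exp (-s)) * s ^ (-1 - b) :=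
    norm_of_nonneg (mul_nonneg (sub_nonneg.2 (exp_le_one_iff.2 (by linarith)))
      (rpow_nonneg hs.le _))
  rw [← Ioo_union_Ici_eq_Ioi zero_lt_one, integrableOn_union,
    integrableOn_Ici_iff_integrableOn_Ioi]
  constructor
  · refine ((intervalIntegral.integrableOn_Ioo_rpow_iff one_pos).2 (by linarith : -1 < -b)).mono'
      hmeas.restrict ?_
    filter_upwards [ae_restrict_mem measurableSet_Ioo] with s hs
    have hs : 0 < s := hs.1
    calc ‖(1 - exp (-s)) * s ^ (-1 - b)‖ ≤ s * s ^ (-1 - b) := by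
          rw [hnorm hs]; gcongr; linarith [one_sub_le_exp_neg s]
      _ = s ^ (-b) := by
          rw [← rpow_one_add' hs.le (by linarith)]; ring_nf
  · refine (integrableOn_Ioi_rpow_of_lt (by linarith : -1 - b < -1) one_pos).mono'
      hmeas.restrict ?_
    filter_upwards [ae_restrict_mem measurableSet_Ioi] with s (hs : 1 < s)
    rw [hnorm (by linarith)]
    exact mul_le_of_le_one_left (rpow_nonneg (by linarith) _) (by linarith [exp_pos (-s)])

theorem integral_one_sub_exp_neg_mul_rpow_pos {b : ℝ} (hb0 : 0 < b) (hb1 : b < 1) :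
    0 < ∫ s in Ioi 0, (1 - exp (-s)) * s ^ (-1 - b) := by
  have hpos : ∀ s ∈ Ioi (0 : ℝ), 0 < (1 - exp (-s)) * s ^ (-1 - b) := fun s hs =>
    mul_pos (sub_pos.2 (exp_lt_one_iff.2 (neg_lt_zero.2 hs))) (rpow_pos_of_pos hs _)
  rw [setIntegral_pos_iff_support_of_nonneg_ae
      ((ae_restrict_iff' measurableSet_Ioi).2 (.of_forall fun s hs => (hpos s hs).le))
      (integrableOn_one_sub_exp_neg_mul_rpow hb0 hb1),
    inter_eq_self_of_subset_right (show Ioi (0 : ℝ) ⊆ Function.support _ from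
      fun s hs => (hpos s hs).ne')]
  simp

theorem one_sub_exp_neg_mul_mul_rpow_eq {b t u : ℝ} (ht : 0 < t) (hu : 0 < u) :
    (1 - exp (-(t * u))) * t ^ (-1 - b) =
      u ^ (1 + b) * ((1 - exp (-(t * u))) * (t * u) ^ (-1 - b)) := by
  have : u ^ (1 + b) * u ^ (-1 - b) = 1 := by rw [← rpow_add hu]; simp
  rw [mul_rpow ht.le hu.le]
  linear_combination -(1 - exp (-(t * u))) * t ^ (-1 - b) * this

theorem integrableOn_one_sub_exp_neg_mul_mul_rpow {b u : ℝ} (hb0 : 0 < b) (hb1 : b < 1)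
    (hu : 0 ≤ u) : IntegrableOn (fun t : ℝ => (1 - exp (-(t * u))) * t ^ (-1 - b)) (Ioi 0) := by
  rcases hu.eq_or_lt with rfl | hu
  · simp
  refine IntegrableOn.congr_fun ?_ (fun t ht => (one_sub_exp_neg_mul_mul_rpow_eq ht hu).symm)
    measurableSet_Ioi
  refine Integrable.const_mul ?_ _
  exact (integrableOn_Ioi_comp_mul_right_iff (fun s => (1 - exp (-s)) * s ^ (-1 - b)) 0 hu).2
    (by simpa using integrableOn_one_sub_exp_neg_mul_rpow hb0 hb1)

theorem integral_one_sub_exp_neg_mul_mul_rpow {b u : ℝ} (hb0 : 0 < b) (hu : 0 ≤ u) :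
    ∫ t in Ioi 0, (1 - exp (-(t * u))) * t ^ (-1 - b) =
      u ^ b * ∫ s in Ioi 0, (1 - exp (-s)) * s ^ (-1 - b) := by
  rcases hu.eq_or_lt with rfl | hu
  · simp [zero_rpow hb0.ne']
  rw [setIntegral_congr_fun measurableSet_Ioi
      (fun t ht => one_sub_exp_neg_mul_mul_rpow_eq ht hu), integral_const_mul,
    integral_comp_mul_right_Ioi (fun s => (1 - exp (-s)) * s ^ (-1 - b)) 0 hu, zero_mul,
    smul_eq_mul, rpow_add hu, rpow_one]
  field_simp

end IntegralRepresentation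

section ConditionallyNegativeDefinite

variable {E : Type*} [NormedAddCommGroup E] [InnerProductSpace ℝ E] {ι : Type*} [Fintype ι]

theorem sum_mul_mul_norm_sub_sq {c : ι → ℝ} (hc : ∑ i, c i = 0) (x : ι → E) :
    ∑ i, ∑ j, c i * c j * ‖x i - x j‖ ^ 2 = -2 * ‖∑ i, c i • x i‖ ^ 2 := by
  have hnorm : ∑ i, ∑ j, c i * c j * (‖x i‖ ^ 2 + ‖x j‖ ^ 2) =
      (∑ i, c i * ‖x i‖ ^ 2) * ∑ j, c j + (∑ i, c i) * ∑ j, c j * ‖x j‖ ^ 2 := by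
    simp only [sum_mul_sum, ← sum_add_distrib]
    exact sum_congr rfl fun i _ => sum_congr rfl fun j _ => by ring
  have hinner : ‖∑ i, c i • x i‖ ^ 2 = ∑ i, ∑ j, c i * c j * ⟪x i, x j⟫ := by
    simp only [← real_inner_self_eq_norm_sq, sum_inner, inner_sum, real_inner_smul_left,
      real_inner_smul_right]
    exact sum_congr rfl fun i _ => sum_congr rfl fun j _ => by
      rw [real_inner_comm (x i) (x j)]; ring
  calc ∑ i, ∑ j, c i * c j * ‖x i - x j‖ ^ 2
      = ∑ i, ∑ j, c i * c j * (‖x i‖ ^ 2 + ‖x j‖ ^ 2) -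
          2 * ∑ i, ∑ j, c i * c j * ⟪x i, x j⟫ := by
        simp only [norm_sub_sq_real, mul_sum, ← sum_sub_distrib]
        exact sum_congr rfl fun i _ => sum_congr rfl fun j _ => by ring
    _ = -2 * ‖∑ i, c i • x i‖ ^ 2 := by rw [hnorm, hinner, hc]; ring

theorem sum_mul_mul_one_sub_exp_neg_mul_norm_sub_sq_nonpos {c : ι → ℝ} (hc : ∑ i, c i = 0)
    {t : ℝ} (ht : 0 ≤ t) (x : ι → E) :
    ∑ i, ∑ j, c i * c j * (1 - exp (-(t * ‖x i - x j‖ ^ 2))) ≤ 0 := by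
  simp only [mul_sub, mul_one, sum_sub_distrib, ← sum_mul_sum, hc, zero_mul, zero_sub,
    neg_nonpos]
  exact sum_mul_mul_exp_neg_mul_norm_sub_sq_nonneg ht x c

theorem sum_mul_mul_norm_sub_rpow_nonpos {c : ι → ℝ} (hc : ∑ i, c i = 0) {α : ℝ}
    (hα0 : 0 < α) (hα2 : α ≤ 2) (x : ι → E) :
    ∑ i, ∑ j, c i * c j * ‖x i - x j‖ ^ α ≤ 0 := by
  rcases hα2.eq_or_lt with rfl | hα2
  · simp only [rpow_two, sum_mul_mul_norm_sub_sq hc]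
    exact mul_nonpos_of_nonpos_of_nonneg (by norm_num) (sq_nonneg _)
  obtain ⟨b, rfl⟩ : ∃ b, α = 2 * b := ⟨α / 2, by ring⟩
  have hb0 : 0 < b := by linarith
  have hb1 : b < 1 := by linarith
  obtain ⟨C, hC, hrepr⟩ : ∃ C > 0, ∀ u ≥ 0,
      ∫ t in Ioi 0, (1 - exp (-(t * u))) * t ^ (-1 - b) = u ^ b * C :=
    ⟨_, integral_one_sub_exp_neg_mul_rpow_pos hb0 hb1,
      fun u hu => integral_one_sub_exp_neg_mul_mul_rpow hb0 hu⟩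
  have hint (i j : ι) :=
    integrableOn_one_sub_exp_neg_mul_mul_rpow hb0 hb1 (sq_nonneg ‖x i - x j‖)
  have hpow (i j : ι) : ‖x i - x j‖ ^ (2 * b) =
      C⁻¹ * ∫ t in Ioi 0, (1 - exp (-(t * ‖x i - x j‖ ^ 2))) * t ^ (-1 - b) := by
    rw [hrepr _ (sq_nonneg _), ← rpow_two, ← rpow_mul (norm_nonneg _)]
    field_simp
  calc ∑ i, ∑ j, c i * c j * ‖x i - x j‖ ^ (2 * b)
      = C⁻¹ * ∑ i, ∑ j, ∫ t in Ioi 0,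
          c i * c j * ((1 - exp (-(t * ‖x i - x j‖ ^ 2))) * t ^ (-1 - b)) := by
        simp only [hpow, integral_const_mul, mul_sum]
        exact sum_congr rfl fun i _ => sum_congr rfl fun j _ => by ring
    _ = C⁻¹ * ∫ t in Ioi 0, ∑ i, ∑ j,
          c i * c j * ((1 - exp (-(t * ‖x i - x j‖ ^ 2))) * t ^ (-1 - b)) := by
        rw [integral_finsetSum _ fun i _ => integrable_finsetSum _ fun j _ =>
          (hint i j).const_mul _]
        congr 1
        exact sum_congr rfl fun i _ =>
          (integral_finsetSum _ fun j _ => (hint i j).const_mul _).symm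
    _ = C⁻¹ * ∫ t in Ioi 0,
          (∑ i, ∑ j, c i * c j * (1 - exp (-(t * ‖x i - x j‖ ^ 2)))) * t ^ (-1 - b) := by
        simp only [sum_mul, mul_assoc]
    _ ≤ 0 := mul_nonpos_of_nonneg_of_nonpos (inv_nonneg.2 hC.le) <|
        setIntegral_nonpos measurableSet_Ioi fun t (ht : 0 < t) =>
          mul_nonpos_of_nonpos_of_nonneg
            (sum_mul_mul_one_sub_exp_neg_mul_norm_sub_sq_nonpos hc ht.le x)
            (rpow_nonneg ht.le _)

end ConditionallyNegativeDefinite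

section EnergyDistance

variable {p : ℕ} {ι κ : Type*} [Fintype ι] [Fintype κ]

theorem giniMean_comm (α : ℝ) (A : ι → EuclideanSpace ℝ (Fin p))
    (B : κ → EuclideanSpace ℝ (Fin p)) : giniMean α A B = giniMean α B A := by
  simp only [giniMean, mul_comm (Fintype.card ι : ℝ), norm_sub_rev (A _)]
  rw [sum_comm]

theorem card_mul_card_mul_giniMean (α : ℝ) (A : ι → EuclideanSpace ℝ (Fin p))
    (B : κ → EuclideanSpace ℝ (Fin p)) :
    ((Fintype.card ι : ℝ) * Fintype.card κ) * giniMean α A B =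
      ∑ i, ∑ m, ‖A i - B m‖ ^ α := by
  rcases eq_or_ne ((Fintype.card ι : ℝ) * Fintype.card κ) 0 with h | h
  · rcases mul_eq_zero.1 h with h | h <;>
      simp_all [Fintype.card_eq_zero_iff]
  · rw [giniMean, ← mul_assoc, mul_one_div_cancel h, one_mul]

noncomputable def energyDistance (α : ℝ) (A : ι → EuclideanSpace ℝ (Fin p))
    (B : κ → EuclideanSpace ℝ (Fin p)) : ℝ :=
  2 * giniMean α A B - giniMean α A A - giniMean α B B

theorem energyDistance_nonneg [Nonempty ι] [Nonempty κ] {α : ℝ} (hα0 : 0 < α)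
    (hα2 : α ≤ 2) (A : ι → EuclideanSpace ℝ (Fin p))
    (B : κ → EuclideanSpace ℝ (Fin p)) : 0 ≤ energyDistance α A B := by
  have ha : (0 : ℝ) < Fintype.card ι := by positivity
  have hb : (0 : ℝ) < Fintype.card κ := by positivity
  have hc : ∑ i, Sum.elim (fun _ : ι => (Fintype.card κ : ℝ))
      (fun _ : κ => -(Fintype.card ι : ℝ)) i = 0 := by
    simp [Fintype.sum_sum_type, mul_comm]
  have key := sum_mul_mul_norm_sub_rpow_nonpos hc hα0 hα2 (Sum.elim A B)
  simp only [Fintype.sum_sum_type, Sum.elim_inl, Sum.elim_inr, sum_add_distrib, mul_assoc,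
    ← mul_sum, ← card_mul_card_mul_giniMean, giniMean_comm α B A] at key
  refine nonneg_of_mul_nonneg_right ?_ (pow_pos (mul_pos ha hb) 2)
  unfold energyDistance
  linear_combination key

end EnergyDistance

theorem between_sample_dispersion_nonneg_general
    (p K : ℕ) (α : ℝ) (hα0 : 0 < α) (hα2 : α ≤ 2)
    (n : Fin K → ℕ)
    (A : (j : Fin K) → Fin (n j) → EuclideanSpace ℝ (Fin p)) :
    0 ≤ ∑ j : Fin K, ∑ k : Fin K,
          if j < k then
            ((n j : ℝ) * (n k : ℝ) / (2 * ∑ l : Fin K, (n l : ℝ))) *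
              (2 * giniMean α (A j) (A k) - giniMean α (A j) (A j)
                - giniMean α (A k) (A k))
          else 0 := by
  refine sum_nonneg fun j _ => sum_nonneg fun k _ => ?_
  split_ifs
  · obtain hj | hj := (n j).eq_zero_or_pos
    · simp [hj]
    obtain hk | hk := (n k).eq_zero_or_pos
    · simp [hk]
    have := Fin.pos_iff_nonempty.1 hj
    have := Fin.pos_iff_nonempty.1 hk
    exact mul_nonneg (by positivity) (energyDistance_nonneg hα0 hα2 (A j) (A k))
  · exact le_rfl

/-- Nonnegativity of the between-sample dispersion `S_α` for `0 < α ≤ 2`. -/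
theorem between_sample_dispersion_nonneg
    (p K : ℕ) (α : ℝ) (hα0 : 0 < α) (hα2 : α ≤ 2)
    (n : Fin K → ℕ) (hn : ∀ j, 1 ≤ n j)
    (A : (j : Fin K) → Fin (n j) → EuclideanSpace ℝ (Fin p)) :
    0 ≤ ∑ j : Fin K, ∑ k : Fin K,
          if j < k then
            ((n j : ℝ) * (n k : ℝ) / (2 * ∑ l : Fin K, (n l : ℝ))) *
              (2 * giniMean α (A j) (A k) - giniMean α (A j) (A j)
                - giniMean α (A k) (A k))
          else 0 :=
  between_sample_dispersion_nonneg_general p K α hα0 hα2 n A
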